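/- arXiv:1711.04894 — 3 statements merged into one kernel-verified Lean document; each statement's English description precedes it below -/
import Mathlib

section
/- With the notation of the generalized Fisher IPM, if $\frac{\mathbb{P}-\mathbb{Q}}{\mu}$ is not $\mu$-a.e. zero, then the supremum in the Fisher IPM is attained by the function $f_\chi = \frac{1}{\mathcal{F}_\mu(\mathbb{P},\mathbb{Q})}\cdot\frac{\mathbb{P}-\mathbb{Q}}{\mu}$, where $\mathcal{F}_\mu(\mathbb{P},\mathbb{Q}) = \|\frac{\mathbb{P}-\mathbb{Q}}{\mu}\|_{L^2(\mathcal{X},\mu)}$. -/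
open MeasureTheory

/-- The generalized Fisher IPM supremum is attained by the optimal critic
`f_χ = ((P-Q)/μ) / F_μ(P,Q)`, where `F_μ(P,Q) = ‖(P-Q)/μ‖_{L²(μ)}`, provided
`(P-Q)/μ` is not `μ`-a.e. zero. -/
theorem fisher_ipm_optimal_critic
    {α : Type*} [MeasurableSpace α] (ν : Measure α) [SigmaFinite ν]
    (μ P Q : α → ℝ)
    (hμ : ∀ x, 0 < μ x) (hμmeas : Measurable μ) (hμ1 : ∫ x, μ x ∂ν = 1)
    (hP : ∀ x, 0 ≤ P x) (hPmeas : Measurable P) (hP1 : ∫ x, P x ∂ν = 1)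
    (hQ : ∀ x, 0 ≤ Q x) (hQmeas : Measurable Q) (hQ1 : ∫ x, Q x ∂ν = 1)
    (hL2 : Integrable (fun x => ((P x - Q x) / μ x) ^ 2 * μ x) ν)
    (hne : ¬ (∀ᵐ x ∂(ν.withDensity (fun x => ENNReal.ofReal (μ x))),
        (P x - Q x) / μ x = 0)) :
    IsGreatest {y : ℝ | ∃ f : α → ℝ, Measurable f ∧
        Integrable (fun x => f x ^ 2 * μ x) ν ∧
        (∫ x, f x ^ 2 * μ x ∂ν) ≤ 1 ∧
        y = ∫ x, f x * (P x - Q x) ∂ν}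
      (∫ x, ((1 / Real.sqrt (∫ z, ((P z - Q z) / μ z) ^ 2 * μ z ∂ν)) *
          ((P x - Q x) / μ x)) * (P x - Q x) ∂ν) := by
  set g : α → ℝ := fun x => (P x - Q x) / μ x with hgdef
  have hgx : ∀ x, g x = (P x - Q x) / μ x := fun x => rfl
  have hgmul : ∀ x, g x * μ x = P x - Q x := fun x =>
    div_mul_cancel₀ _ (hμ x).ne'
  set S : ℝ := ∫ z, ((P z - Q z) / μ z) ^ 2 * μ z ∂ν with hSdef
  have hL2' : Integrable (fun x => g x ^ 2 * μ x) ν := hL2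
  have hSg : (∫ z, g z ^ 2 * μ z ∂ν) = S := rfl
  have hgmeas : Measurable g := (hPmeas.sub hQmeas).div hμmeas
  have hμnn : ∀ x, 0 ≤ μ x := fun x => (hμ x).le
  have hSnn : 0 ≤ S :=
    integral_nonneg fun x => mul_nonneg (sq_nonneg _) (hμnn x)
  have hSpos : 0 < S := by
    rcases hSnn.lt_or_eq with h | h
    · exact h
    · exfalso
      apply hne
      have h0 : (fun x => ((P x - Q x) / μ x) ^ 2 * μ x) =ᵐ[ν] 0 :=
        (integral_eq_zero_iff_of_nonneg
          (fun x => mul_nonneg (sq_nonneg _) (hμnn x)) hL2).mp h.symm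
      have h1 : ∀ᵐ x ∂ν, (P x - Q x) / μ x = 0 := by
        filter_upwards [h0] with x hx
        have hx' : ((P x - Q x) / μ x) ^ 2 * μ x = 0 := hx
        have hsq0 : ((P x - Q x) / μ x) ^ 2 = 0 := by
          rcases mul_eq_zero.mp hx' with h' | h'
          · exact h'
          · exact absurd h' (hμ x).ne'
        exact pow_eq_zero_iff (two_ne_zero) |>.mp hsq0
      exact (withDensity_absolutelyContinuous ν _).ae_le h1
  have hsq : Real.sqrt S * Real.sqrt S = S := Real.mul_self_sqrt hSnn
  have hsqpos : 0 < Real.sqrt S := Real.sqrt_pos.mpr hSpos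
  -- the target value equals √S
  have htarget : (∫ x, ((1 / Real.sqrt S) * g x) * (P x - Q x) ∂ν)
      = Real.sqrt S := by
    have heq : (fun x => ((1 / Real.sqrt S) * g x) * (P x - Q x))
        = fun x => (1 / Real.sqrt S) * (g x ^ 2 * μ x) := by
      funext x
      rw [sq, mul_assoc (g x), hgmul x]; ring
    rw [heq, integral_const_mul, hSg, one_div, inv_mul_eq_div, Real.div_sqrt]
  rw [htarget]
  constructor
  · -- membership
    refine ⟨fun x => (1 / Real.sqrt S) * g x, measurable_const.mul hgmeas,
      ?_, ?_, htarget.symm⟩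
    · have heq : (fun x => ((1 / Real.sqrt S) * g x) ^ 2 * μ x)
          = fun x => (1 / Real.sqrt S) ^ 2 * (g x ^ 2 * μ x) := by
        funext x; ring
      rw [heq]
      exact hL2'.const_mul _
    · have heq : (fun x => ((1 / Real.sqrt S) * g x) ^ 2 * μ x)
          = fun x => (1 / Real.sqrt S) ^ 2 * (g x ^ 2 * μ x) := by
        funext x; ring
      rw [heq, integral_const_mul, hSg]
      have h12 : (1 / Real.sqrt S) ^ 2 = 1 / S := by
        rw [div_pow, one_pow, sq, hsq]
      rw [h12, one_div, inv_mul_cancel₀ hSpos.ne']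
  · -- upper bound
    rintro y ⟨f, hf, hfi, hf1, rfl⟩
    have hrw : (fun x => f x * (P x - Q x)) = fun x => f x * g x * μ x := by
      funext x; rw [mul_assoc, hgmul]
    rw [hrw]
    -- integrability of f g μ
    have hint : Integrable (fun x => f x * g x * μ x) ν := by
      have hb : Integrable
          (fun x => (f x ^ 2 * μ x + g x ^ 2 * μ x) / 2) ν :=
        (hfi.add hL2').div_const 2
      refine hb.mono ((hf.mul hgmeas).mul hμmeas).aestronglyMeasurable ?_
      refine Filter.Eventually.of_forall fun x => ?_
      have hbnn : 0 ≤ (f x ^ 2 * μ x + g x ^ 2 * μ x) / 2 :=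
        div_nonneg (add_nonneg (mul_nonneg (sq_nonneg _) (hμnn x))
          (mul_nonneg (sq_nonneg _) (hμnn x))) two_pos.le
      rw [Real.norm_eq_abs, Real.norm_eq_abs, abs_of_nonneg hbnn, abs_le]
      constructor
      · nlinarith [mul_nonneg (sq_nonneg (f x + g x)) (hμnn x)]
      · nlinarith [mul_nonneg (sq_nonneg (f x - g x)) (hμnn x)]
    -- pointwise: 2√S f g μ ≤ S f² μ + g² μ
    have hpt : ∀ x, 2 * Real.sqrt S * (f x * g x * μ x)
        ≤ S * (f x ^ 2 * μ x) + g x ^ 2 * μ x := by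
      intro x
      have key : 0 ≤ (Real.sqrt S * f x - g x) ^ 2 * μ x :=
        mul_nonneg (sq_nonneg _) (hμnn x)
      have expand : (Real.sqrt S * f x - g x) ^ 2 * μ x
          = S * (f x ^ 2 * μ x) - 2 * Real.sqrt S * (f x * g x * μ x)
            + g x ^ 2 * μ x := by
        linear_combination (f x ^ 2 * μ x) * hsq
      linarith [expand ▸ key]
    have hmono : ∫ x, 2 * Real.sqrt S * (f x * g x * μ x) ∂ν
        ≤ ∫ x, (S * (f x ^ 2 * μ x) + g x ^ 2 * μ x) ∂ν :=
      integral_mono (hint.const_mul _) ((hfi.const_mul S).add hL2')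
        fun x => hpt x
    rw [integral_const_mul, integral_add (hfi.const_mul S) hL2',
      integral_const_mul, hSg] at hmono
    have h2 : 2 * Real.sqrt S * ∫ x, f x * g x * μ x ∂ν ≤ 2 * S := by
      have hSA : S * ∫ x, f x ^ 2 * μ x ∂ν ≤ S * 1 :=
        mul_le_mul_of_nonneg_left hf1 hSnn
      linarith
    have hfin : ∫ x, f x * g x * μ x ∂ν ≤ S / Real.sqrt S := by
      rw [le_div_iff₀ hsqpos]
      nlinarith
    rwa [Real.div_sqrt] at hfin
end

section
/- If $\mu = \mathbb{P}$ (so $\mu$ need not dominate $\mathbb{Q}$ symmetrically), then the squared Fisher IPM equals the Pearson chi-squared divergence: $\mathcal{F}^2_{\mathbb{P}}(\mathbb{P},\mathbb{Q}) = \int_{\mathcal{X}} \frac{(\mathbb{P}(x)-\mathbb{Q}(x))^2}{\mathbb{P}(x)}\,dx$. -/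
/-! Writing `f d = (f √w) (d / √w)`, Cauchy–Schwarz in `L²(μ)` bounds every pairing `∫ f d` with
`∫ f² w ≤ 1` by `√C`, where `C = ∫ d² / w`; for `C > 0` the bound is attained by
`f = d / (w √C)`. With `w = P` and `d = P - Q` this gives `F_P(P, Q)² = C`. -/

open MeasureTheory

section
variable {α : Type*} [MeasurableSpace α] {μ : Measure α}

theorem integral_mul_le_sqrt_integral_sq_mul_sqrt_integral_sq {g h : α → ℝ}
    (hg : MemLp g 2 μ) (hh : MemLp h 2 μ) :
    ∫ x, g x * h x ∂μ ≤ √(∫ x, g x ^ 2 ∂μ) * √(∫ x, h x ^ 2 ∂μ) := by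
  have two : ENNReal.ofReal 2 = 2 := ENNReal.ofReal_ofNat 2
  have hnorm_sq : ∀ u : ℝ, ‖u‖ ^ (2 : ℝ) = u ^ 2 := fun u => by
    rw [Real.rpow_two, Real.norm_eq_abs, sq_abs]
  calc ∫ x, g x * h x ∂μ ≤ ∫ x, ‖g x‖ * ‖h x‖ ∂μ := by
        refine (Real.le_norm_self _).trans ?_
        simpa only [norm_mul] using norm_integral_le_integral_norm (fun x => g x * h x)
    _ ≤ (∫ x, ‖g x‖ ^ (2 : ℝ) ∂μ) ^ (1 / (2 : ℝ)) * (∫ x, ‖h x‖ ^ (2 : ℝ) ∂μ) ^ (1 / (2 : ℝ)) :=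
        integral_mul_norm_le_Lp_mul_Lq .two_two (two ▸ hg) (two ▸ hh)
    _ = √(∫ x, g x ^ 2 ∂μ) * √(∫ x, h x ^ 2 ∂μ) := by
        simp only [hnorm_sq, Real.sqrt_eq_rpow]

theorem integral_mul_le_sqrt_integral_sq_mul_mul_sqrt_integral_sq_div {w d f : α → ℝ}
    (hw : ∀ x, 0 < w x) (hw_meas : Measurable w) (hd_meas : Measurable d)
    (hf_meas : Measurable f) (hf : Integrable (fun x => f x ^ 2 * w x) μ)
    (hd : Integrable (fun x => d x ^ 2 / w x) μ) :
    ∫ x, f x * d x ∂μ ≤ √(∫ x, f x ^ 2 * w x ∂μ) * √(∫ x, d x ^ 2 / w x ∂μ) := by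
  have hsq_f : ∀ x, (f x * √(w x)) ^ 2 = f x ^ 2 * w x := fun x => by
    rw [mul_pow, Real.sq_sqrt (hw x).le]
  have hsq_d : ∀ x, (d x / √(w x)) ^ 2 = d x ^ 2 / w x := fun x => by
    rw [div_pow, Real.sq_sqrt (hw x).le]
  have hfd : ∀ x, f x * d x = f x * √(w x) * (d x / √(w x)) := fun x => by
    field_simp [(Real.sqrt_pos.2 (hw x)).ne']
  have hg : MemLp (fun x => f x * √(w x)) 2 μ :=
    (memLp_two_iff_integrable_sq (by fun_prop)).2 (by simpa only [hsq_f] using hf)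
  have hh : MemLp (fun x => d x / √(w x)) 2 μ :=
    (memLp_two_iff_integrable_sq (hd_meas.div hw_meas.sqrt).aestronglyMeasurable).2
      (by simpa only [Pi.div_apply, hsq_d] using hd)
  simpa only [← hfd, hsq_f, hsq_d] using
    integral_mul_le_sqrt_integral_sq_mul_sqrt_integral_sq hg hh

/-- For a dominant measure with density `w` and `d = P - Q`, `F(P, Q)` is the supremum of
this set. -/
def fisherIPMValues (μ : Measure α) (w d : α → ℝ) : Set ℝ :=
  {y | ∃ f : α → ℝ, Measurable f ∧ Integrable (fun x => f x ^ 2 * w x) μ ∧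
    (∫ x, f x ^ 2 * w x ∂μ) ≤ 1 ∧ y = ∫ x, f x * d x ∂μ}

section
variable {w d : α → ℝ} (hw : ∀ x, 0 < w x) (hw_meas : Measurable w) (hd_meas : Measurable d)
  (hd : Integrable (fun x => d x ^ 2 / w x) μ)
include hw hw_meas hd_meas hd

theorem le_sqrt_integral_sq_div_of_mem_fisherIPMValues {y : ℝ}
    (hy : y ∈ fisherIPMValues μ w d) : y ≤ √(∫ x, d x ^ 2 / w x ∂μ) := by
  obtain ⟨f, hf_meas, hf, hf_le, rfl⟩ := hy
  calc ∫ x, f x * d x ∂μ ≤ √(∫ x, f x ^ 2 * w x ∂μ) * √(∫ x, d x ^ 2 / w x ∂μ) :=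
        integral_mul_le_sqrt_integral_sq_mul_mul_sqrt_integral_sq_div hw hw_meas hd_meas hf_meas
          hf hd
    _ ≤ 1 * √(∫ x, d x ^ 2 / w x ∂μ) := by
        gcongr
        exact Real.sqrt_le_one.2 hf_le
    _ = √(∫ x, d x ^ 2 / w x ∂μ) := one_mul _

theorem sqrt_integral_sq_div_mem_fisherIPMValues :
    √(∫ x, d x ^ 2 / w x ∂μ) ∈ fisherIPMValues μ w d := by
  set C := ∫ x, d x ^ 2 / w x ∂μ
  have hC0 : 0 ≤ C := integral_nonneg fun x => div_nonneg (sq_nonneg _) (hw x).le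
  rcases hC0.eq_or_lt with hC | hC
  · exact ⟨0, measurable_const, by simp, by simp, by simp [← hC]⟩
  have hsqrtC : √C ≠ 0 := (Real.sqrt_pos.2 hC).ne'
  have hsq : ∀ x, (d x / (w x * √C)) ^ 2 * w x = d x ^ 2 / w x / C := fun x => by
    have := (hw x).ne'
    field_simp
    rw [Real.sq_sqrt hC.le]
  have hpair : ∀ x, d x / (w x * √C) * d x = d x ^ 2 / w x / √C := fun x => by
    have := (hw x).ne'
    field_simp
  refine ⟨fun x => d x / (w x * √C), by fun_prop, ?_, ?_, ?_⟩
  · simpa only [hsq] using hd.div_const C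
  · simp only [hsq, integral_div]
    exact (div_self hC.ne').le
  · simp only [hpair, integral_div]
    exact Real.div_sqrt.symm

theorem isGreatest_fisherIPMValues :
    IsGreatest (fisherIPMValues μ w d) √(∫ x, d x ^ 2 / w x ∂μ) :=
  ⟨sqrt_integral_sq_div_mem_fisherIPMValues hw hw_meas hd_meas hd,
    fun _ => le_sqrt_integral_sq_div_of_mem_fisherIPMValues hw hw_meas hd_meas hd⟩

end

end

theorem fisher_ipm_mu_eq_P_pearson_general
    {α : Type*} [MeasurableSpace α] (ν : Measure α)
    (P Q : α → ℝ)
    (hP : ∀ x, 0 < P x) (hPmeas : Measurable P)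
    (hQmeas : Measurable Q)
    (hL2 : Integrable (fun x => (P x - Q x) ^ 2 / P x) ν) :
    (sSup {y : ℝ | ∃ f : α → ℝ, Measurable f ∧
        Integrable (fun x => f x ^ 2 * P x) ν ∧
        (∫ x, f x ^ 2 * P x ∂ν) ≤ 1 ∧
        y = ∫ x, f x * (P x - Q x) ∂ν}) ^ 2
      = ∫ x, (P x - Q x) ^ 2 / P x ∂ν := by
  change sSup (fisherIPMValues ν P fun x => P x - Q x) ^ 2 = _
  have hmax :=
    isGreatest_fisherIPMValues (d := fun x => P x - Q x) hP hPmeas (hPmeas.sub hQmeas) hL2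
  rw [hmax.csSup_eq,
    Real.sq_sqrt (integral_nonneg fun x => div_nonneg (sq_nonneg _) (hP x).le)]

/-- With dominant measure `μ = P`, the squared Fisher IPM equals the Pearson chi-squared
divergence `∫ (P - Q)² / P`. -/
theorem fisher_ipm_mu_eq_P_pearson
    {α : Type*} [MeasurableSpace α] (ν : Measure α) [SigmaFinite ν]
    (P Q : α → ℝ)
    (hP : ∀ x, 0 < P x) (hPmeas : Measurable P) (hP1 : ∫ x, P x ∂ν = 1)
    (hQ : ∀ x, 0 ≤ Q x) (hQmeas : Measurable Q) (hQ1 : ∫ x, Q x ∂ν = 1)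
    (hL2 : Integrable (fun x => (P x - Q x) ^ 2 / P x) ν) :
    (sSup {y : ℝ | ∃ f : α → ℝ, Measurable f ∧
        Integrable (fun x => f x ^ 2 * P x) ν ∧
        (∫ x, f x ^ 2 * P x ∂ν) ≤ 1 ∧
        y = ∫ x, f x * (P x - Q x) ∂ν}) ^ 2
      = ∫ x, (P x - Q x) ^ 2 / P x ∂ν :=
  fisher_ipm_mu_eq_P_pearson_general ν P Q hP hPmeas hQmeas hL2
end

section
/- Suppose $f^*$ is $C^2$ on $\mathcal{X}\subset\mathbb{R}^d$, $\mu$ is a $C^1$ strictly positive density, $\lambda^* > 0$, and $f^*$ satisfies $\nabla_i f^*(x) = \frac{D^{-i}F_{\mathbb{Q}}(x) - D^{-i}F_{\mathbb{P}}(x)}{\lambda^* d\, \mu(x)}$ for all $i$. Then $f^*$ satisfies the PDE $\Delta f^*(x) + \langle \nabla \log\mu(x), \nabla f^*(x)\rangle + \frac{\mathbb{P}(x)-\mathbb{Q}(x)}{\lambda^* \mu(x)} = 0$. -/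
open MeasureTheory

noncomputable def pdv {d : ℕ} (i : Fin d) (F : (Fin d → ℝ) → ℝ) : (Fin d → ℝ) → ℝ :=
  fun x => deriv (fun t : ℝ => F (Function.update x i t)) (x i)

noncomputable def Dnot {d : ℕ} (i : Fin d) (F : (Fin d → ℝ) → ℝ) : (Fin d → ℝ) → ℝ :=
  ((Finset.univ.erase i).toList).foldr (fun j G => pdv j G) F

noncomputable def jcdf {d : ℕ} (P : (Fin d → ℝ) → ℝ) : (Fin d → ℝ) → ℝ :=
  fun x => ∫ u in Set.Iic x, P u

/-!
Differentiating the gradient formula `∂ᵢ f* = (D^{-i}F_Q - D^{-i}F_P) / (λ* d μ)` once more in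
the `i`-th coordinate, the quotient rule and `∂ᵢ D^{-i}F = density` give
`∂²ᵢᵢ f* = (Q - P) / (λ* d μ) - (∂ᵢ μ / μ) ∂ᵢ f*`. Summing over the `d` coordinates turns the
first term into `(Q - P) / (λ* μ)`, and `∂ᵢ μ / μ = ∂ᵢ log μ`.
-/

open Function

section

variable {d : ℕ} {i : Fin d} {F G : (Fin d → ℝ) → ℝ} {x : Fin d → ℝ}

theorem hasDerivAt_comp_update (hF : DifferentiableAt ℝ F x) :
    HasDerivAt (fun t => F (update x i t)) (fderiv ℝ F x (Pi.single i 1)) (x i) := by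
  have hF' : DifferentiableAt ℝ F (update x i (x i)) := by rwa [update_eq_self]
  have h := hF'.hasFDerivAt.comp_hasDerivAt (x i) (hasDerivAt_update x i (x i))
  rw [update_eq_self] at h
  exact h

theorem pdv_eq_fderiv (hF : DifferentiableAt ℝ F x) :
    pdv i F x = fderiv ℝ F x (Pi.single i 1) :=
  (hasDerivAt_comp_update hF).deriv

theorem hasDerivAt_pdv (hF : DifferentiableAt ℝ F x) :
    HasDerivAt (fun t => F (update x i t)) (pdv i F x) (x i) :=
  pdv_eq_fderiv hF ▸ hasDerivAt_comp_update hF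

theorem contDiff_pdv {n : WithTop ℕ∞} (hF : ContDiff ℝ (n + 1) F) : ContDiff ℝ n (pdv i F) := by
  have hdiff : Differentiable ℝ F := hF.differentiable (by simp)
  rw [show pdv i F = fun y => fderiv ℝ F y (Pi.single i 1) from
    funext fun y => pdv_eq_fderiv (hdiff y)]
  exact (hF.fderiv_right le_rfl).clm_apply contDiff_const

theorem contDiff_foldr_pdv (l : List (Fin d)) {n : WithTop ℕ∞}
    (hF : ContDiff ℝ (n + l.length) F) : ContDiff ℝ n (l.foldr pdv F) := by
  induction l generalizing n with
  | nil => simpa using hF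
  | cons j l ih =>
    refine contDiff_pdv (ih ?_)
    rwa [List.length_cons, Nat.cast_add, Nat.cast_one, ← add_assoc, add_right_comm] at hF

theorem contDiff_Dnot {n : WithTop ℕ∞} (hF : ContDiff ℝ (n + (d - 1 : ℕ)) F) :
    ContDiff ℝ n (Dnot i F) := by
  have hlen : ((Finset.univ.erase i).toList).length = d - 1 := by
    simp [Finset.card_erase_of_mem]
  exact contDiff_foldr_pdv _ (hlen ▸ hF)

theorem differentiable_Dnot (hd : 0 < d) (hF : ContDiff ℝ d F) :
    Differentiable ℝ (Dnot i F) := by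
  refine (contDiff_Dnot (n := 1) ?_).differentiable one_ne_zero
  rwa [← Nat.cast_one, ← Nat.cast_add, Nat.add_sub_cancel' hd]

theorem pdv_sub (hF : DifferentiableAt ℝ F x) (hG : DifferentiableAt ℝ G x) :
    pdv i (fun y => F y - G y) x = pdv i F x - pdv i G x :=
  ((hasDerivAt_pdv hF).sub (hasDerivAt_pdv hG)).deriv

theorem pdv_log (hF : DifferentiableAt ℝ F x) (hx : F x ≠ 0) :
    pdv i (fun y => Real.log (F y)) x = pdv i F x / F x := by
  have h := (hasDerivAt_pdv (i := i) hF).log (by rwa [update_eq_self])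
  rw [update_eq_self] at h
  exact h.deriv

theorem pdv_div_const_mul (hF : DifferentiableAt ℝ F x) (hG : DifferentiableAt ℝ G x)
    {c : ℝ} (hc : c ≠ 0) (hx : G x ≠ 0) :
    pdv i (fun y => F y / (c * G y)) x
      = pdv i F x / (c * G x) - pdv i G x / G x * (F x / (c * G x)) := by
  have h := (hasDerivAt_pdv (i := i) hF).div ((hasDerivAt_pdv (i := i) hG).const_mul c)
    (by rw [update_eq_self]; exact mul_ne_zero hc hx)
  rw [update_eq_self] at h
  exact h.deriv.trans (by field_simp)

end

theorem sobolev_critic_satisfies_pde_general {d : ℕ} (hd : 0 < d)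
    (μ P Q : (Fin d → ℝ) → ℝ) (fstar : (Fin d → ℝ) → ℝ)
    (hμ : ∀ x, 0 < μ x) (hμsmooth : ContDiff ℝ 1 μ)
    (hFP : ContDiff ℝ d (jcdf P)) (hFQ : ContDiff ℝ d (jcdf Q))
    -- regularity of the CDFs, so that `∂ᵢ D^{-i} F_P = P` and `∂ᵢ D^{-i} F_Q = Q`
    (hPder : ∀ (i : Fin d) (x : Fin d → ℝ), pdv i (Dnot i (jcdf P)) x = P x)
    (hQder : ∀ (i : Fin d) (x : Fin d → ℝ), pdv i (Dnot i (jcdf Q)) x = Q x)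
    (lam : ℝ) (hlam : 0 < lam)
    (hgrad : ∀ (i : Fin d) (x : Fin d → ℝ),
        pdv i fstar x = (Dnot i (jcdf Q) x - Dnot i (jcdf P) x) / (lam * d * μ x)) :
    ∀ x : Fin d → ℝ,
      (∑ i, pdv i (pdv i fstar) x)
        + (∑ i, pdv i (fun y => Real.log (μ y)) x * pdv i fstar x)
        + (P x - Q x) / (lam * μ x) = 0 := by
  intro x
  have hμx : μ x ≠ 0 := (hμ x).ne'
  have hd' : (d : ℝ) ≠ 0 := Nat.cast_ne_zero.mpr hd.ne'
  have hμdiff : DifferentiableAt ℝ μ x := hμsmooth.differentiable one_ne_zero x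
  have hsecond : ∀ i, pdv i (pdv i fstar) x
      = (Q x - P x) / (lam * d * μ x) - pdv i μ x / μ x * pdv i fstar x := by
    intro i
    have hDQ := differentiable_Dnot (i := i) hd hFQ x
    have hDP := differentiable_Dnot (i := i) hd hFP x
    calc pdv i (pdv i fstar) x
        = pdv i (fun y => (Dnot i (jcdf Q) y - Dnot i (jcdf P) y) / (lam * d * μ y)) x := by
          rw [funext (hgrad i)]
      _ = (Q x - P x) / (lam * d * μ x) - pdv i μ x / μ x * pdv i fstar x := by
          rw [pdv_div_const_mul (F := fun y => Dnot i (jcdf Q) y - Dnot i (jcdf P) y)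
              (hDQ.sub hDP) hμdiff (mul_ne_zero hlam.ne' hd') hμx,
            pdv_sub hDQ hDP, hQder, hPder, hgrad]
  simp only [hsecond, pdv_log hμdiff hμx, Finset.sum_sub_distrib, Finset.sum_const,
    Finset.card_univ, Fintype.card_fin, nsmul_eq_mul]
  field_simp
  ring

/-- If `∇ᵢ f*(x) = (D^{-i}F_Q(x) - D^{-i}F_P(x)) / (λ* d μ(x))` for all `i`, then `f*`
solves the elliptic PDE `Δf* + ⟨∇ log μ, ∇f*⟩ + (P - Q)/(λ* μ) = 0`. -/
theorem sobolev_critic_satisfies_pde {d : ℕ} (hd : 0 < d)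
    (μ P Q : (Fin d → ℝ) → ℝ) (fstar : (Fin d → ℝ) → ℝ)
    (hμ : ∀ x, 0 < μ x) (hμsmooth : ContDiff ℝ 1 μ)
    (hfsmooth : ContDiff ℝ 2 fstar)
    (hFP : ContDiff ℝ d (jcdf P)) (hFQ : ContDiff ℝ d (jcdf Q))
    -- regularity of the CDFs, so that `∂ᵢ D^{-i} F_P = P` and `∂ᵢ D^{-i} F_Q = Q`
    (hPder : ∀ (i : Fin d) (x : Fin d → ℝ), pdv i (Dnot i (jcdf P)) x = P x)
    (hQder : ∀ (i : Fin d) (x : Fin d → ℝ), pdv i (Dnot i (jcdf Q)) x = Q x)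
    (lam : ℝ) (hlam : 0 < lam)
    (hgrad : ∀ (i : Fin d) (x : Fin d → ℝ),
        pdv i fstar x = (Dnot i (jcdf Q) x - Dnot i (jcdf P) x) / (lam * d * μ x)) :
    ∀ x : Fin d → ℝ,
      (∑ i, pdv i (pdv i fstar) x)
        + (∑ i, pdv i (fun y => Real.log (μ y)) x * pdv i fstar x)
        + (P x - Q x) / (lam * μ x) = 0 :=
  sobolev_critic_satisfies_pde_general hd μ P Q fstar hμ hμsmooth hFP hFQ hPder hQder lam hlam hgrad
end
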